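/- (Stuttering property) Let s ∈ S be a witness of compatibility of u ∈ Σ_D^ω with a multiset M = {v₁,…,v_k} of contributor ω-words. If s′ is obtained from s by replacing, at each position i of a chosen set I of positions carrying contributor symbols, the symbol (s)_i by (s)_i^{ℓ_i+1} for some ℓ_i ≥ 0, then s′ ∈ S, and u is compatible with M ⊕ {v_s} where v_s is the ω-word formed by the inserted repetitions (s)_{i₁}^{ℓ_{i₁}} (s)_{i₂}^{ℓ_{i₂}} ⋯ taken in increasing order of positions, with s′ a witness of this compatibility. -/
import Mathlib


/-- Read/write actions over a set `G` of global values: leader reads/writes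
(`rd`,`wd`, the alphabet `Σ_D`) and contributor reads/writes (`rc`,`wc`, the
alphabet `Σ_C`). -/
inductive Act (G : Type) where
  | rd (g : G) | wd (g : G) | rc (g : G) | wc (g : G)

namespace Act
variable {G : Type}
/-- membership in the leader alphabet `Σ_D` -/
def isD : Act G → Bool | .rd _ => true | .wd _ => true | _ => false
/-- membership in the contributor alphabet `Σ_C` -/
def isC : Act G → Bool | .rc _ => true | .wc _ => true | _ => false
def isWrite : Act G → Bool | .wd _ => true | .wc _ => true | _ => false
def isRead : Act G → Bool | .rd _ => true | .rc _ => true | _ => false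
/-- the value read or written -/
def val : Act G → G | .rd g => g | .wd g => g | .rc g => g | .wc g => g
end Act

/-- The store language `S`: sequences of reads and writes supported by an atomic
register; every read must return the value of the most recent preceding write
(in particular the first action is a write whenever a read ever occurs). -/
def Store (G : Type) : Set (ℕ → Act G) :=
  {s | ∀ i, (s i).isRead = true →
      ∃ j < i, (s j).isWrite = true ∧ (s j).val = (s i).val ∧
        ∀ k, j < k → k < i → (s k).isWrite = false}

/-- `l` is a (finite) prefix of the ω-word `w`. -/
def IsListPrefix {α : Type*} (l : List α) (w : ℕ → α) : Prop :=
  ∀ i (h : i < l.length), l.get ⟨i, h⟩ = w i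

/-- The first `n` letters of the ω-word `w`. -/
def firstN {α : Type*} (w : ℕ → α) (n : ℕ) : List α := (List.range n).map w

/-- The concatenation of the blocks `g 0, g 1, …, g (n-1)`. -/
def blocksConcat {α : Type*} (g : ℕ → List α) (n : ℕ) : List α :=
  ((List.range n).map g).flatten

/-- The ω-word `z` is the infinite concatenation `g 0 · g 1 · g 2 ⋯` of the blocks `g`. -/
def JoinsTo {α : Type*} (g : ℕ → List α) (z : ℕ → α) : Prop :=
  (∀ n, IsListPrefix (blocksConcat g n) z) ∧
  (∀ m, ∃ n, m < (blocksConcat g n).length)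

/-- `z` is an interleaving of the ω-words `x` and `y`. -/
def IsInterleaving {α : Type*} (x y z : ℕ → α) : Prop :=
  ∃ xs ys : ℕ → List α,
    (∀ n, IsListPrefix (blocksConcat xs n) x) ∧
    (∀ n, IsListPrefix (blocksConcat ys n) y) ∧
    JoinsTo (fun i => xs i ++ ys i) z

/-- The shuffle of two ω-languages. -/
def Shuffle {α : Type*} (L₁ L₂ : Set (ℕ → α)) : Set (ℕ → α) :=
  {z | ∃ x ∈ L₁, ∃ y ∈ L₂, IsInterleaving x y z}

/-- The shuffle `v₁ ⧢ ⋯ ⧢ v_k` of a finite multiset (list) of ω-words. -/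
def multiShuffle {α : Type*} : List (ℕ → α) → Set (ℕ → α)
  | [] => ∅
  | [v] => {v}
  | v :: v' :: vs => Shuffle {v} (multiShuffle (v' :: vs))

/-- `s` is a witness of compatibility of the leader word `u` with the multiset `M`
of contributor words: `s ∈ S`, and `s` interleaves `u` with a word of the shuffle
`v₁ ⧢ ⋯ ⧢ v_k` (i.e. the projection of `s` onto `Σ_D` is a prefix of `u` and its
projection onto `Σ_C` is a prefix of a word of the shuffle), so that
`u ∥ s ∥ (v₁ ⧢ ⋯ ⧢ v_k) ≠ ∅`. -/
def IsStoreWitness {G : Type} (u : ℕ → Act G) (M : List (ℕ → Act G)) (s : ℕ → Act G) : Prop :=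
  s ∈ Store G ∧
  (∀ n, IsListPrefix ((firstN s n).filter Act.isD) u) ∧
  (∃ z ∈ multiShuffle M, ∀ n, IsListPrefix ((firstN s n).filter Act.isC) z)

/-- `u` is compatible with the multiset `M`: the language `u ∥ S ∥ (v₁ ⧢ ⋯ ⧢ v_k)`
is non-empty, i.e. there is a witness of compatibility. -/
def Compatible {G : Type} (u : ℕ → Act G) (M : List (ℕ → Act G)) : Prop :=
  ∃ s, IsStoreWitness u M s


section Aux
variable {α : Type*}

lemma blocksConcat_succ' (g : ℕ → List α) (n : ℕ) :
    blocksConcat g (n+1) = blocksConcat g n ++ g n := by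
  simp [blocksConcat, List.range_succ]

lemma firstN_succ' (w : ℕ → α) (n : ℕ) :
    firstN w (n+1) = firstN w n ++ [w n] := by
  simp [firstN, List.range_succ]

lemma isListPrefix_mono {l l' : List α} {w : ℕ → α} (h : l' <+: l)
    (hl : IsListPrefix l w) : IsListPrefix l' w := by
  intro i hi
  have h2 : i < l.length := lt_of_lt_of_le hi h.length_le
  have := hl i h2
  simpa [List.get_eq_getElem, h.getElem hi] using this

lemma firstN_prefix_firstN (w : ℕ → α) {a b : ℕ} (h : a ≤ b) :
    firstN w a <+: firstN w b := by
  rw [List.prefix_iff_eq_take]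
  show List.map w (List.range a) = List.take (List.map w (List.range a)).length _
  rw [List.length_map, List.length_range]
  unfold firstN
  rw [← List.map_take, List.take_range, Nat.min_eq_left h]

lemma isListPrefix_firstN (w : ℕ → α) (n : ℕ) : IsListPrefix (firstN w n) w := by
  intro i hi
  simp [firstN] at hi ⊢

lemma isListPrefix_eq_firstN {l : List α} {w : ℕ → α} (h : IsListPrefix l w) :
    l = firstN w l.length := by
  apply List.ext_getElem
  · simp [firstN]
  · intro i h1 h2
    have := h i h1
    simpa [firstN] using this

lemma exists_limit (g : ℕ → List α) (hmono : ∀ n, g n <+: g (n+1))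
    (hub : ∀ k, ∃ n, k < (g n).length) :
    ∃ z : ℕ → α, ∀ n, IsListPrefix (g n) z := by
  have hchain : ∀ {a b : ℕ}, a ≤ b → g a <+: g b := by
    intro a b hab
    induction b with
    | zero => simpa [Nat.le_zero.mp hab]
    | succ b ih =>
      rcases Nat.lt_or_ge a (b+1) with h | h
      · exact (ih (by omega)).trans (hmono b)
      · have : a = b + 1 := by omega
        simp [this]
  choose N hN using hub
  refine ⟨fun p => (g (N p))[p]'(hN p), ?_⟩
  intro n i hi
  rcases Nat.le_total n (N i) with h | h
  · exact (hchain h).getElem hi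
  · exact ((hchain h).getElem (hN i)).symm

end Aux

section ActAux
variable {G : Type}

lemma read_not_write (a : Act G) (h : a.isRead = true) : a.isWrite = false := by
  cases a <;> simp_all [Act.isRead, Act.isWrite]

lemma isD_iff_not_isC (a : Act G) : a.isD = true ↔ a.isC = false := by
  cases a <;> simp [Act.isD, Act.isC]

end ActAux

/-- **Stuttering property.** Let `s ∈ S` be a witness of compatibility of
`u ∈ Σ_D^ω` with the multiset `M = {v₁,…,v_k}` of contributor ω-words. Choose a
multiplicity `m i ≥ 1` for every position `i`, with `m i > 1` only at positions
carrying contributor symbols (the set `I`, with `m i = ℓ_i + 1` there). Let `s′` be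
the ω-word obtained from `s` by replacing each `(s)_i` by `(s)_i^{m i}`, and let
`v_s` be the ω-word formed by the inserted repetitions `(s)_i^{m i − 1}` taken in
increasing order of positions. Then `s′ ∈ S`, and `s′` is a witness of
compatibility of `u` with `M ⊕ {v_s}`. -/
theorem stuttering {G : Type} (u : ℕ → Act G) (M : List (ℕ → Act G))
    (s s' vs : ℕ → Act G) (m : ℕ → ℕ)
    (hu : ∀ i, (u i).isD = true)
    (hM : ∀ x ∈ M, ∀ i, (x i).isC = true)
    (hwit : IsStoreWitness u M s)
    (hm : ∀ i, 1 ≤ m i)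
    (hmC : ∀ i, m i ≠ 1 → (s i).isC = true)
    (hs' : JoinsTo (fun i => List.replicate (m i) (s i)) s')
    (hvs : JoinsTo (fun i => List.replicate (m i - 1) (s i)) vs) :
    s' ∈ Store G ∧ IsStoreWitness u (vs :: M) s' := by
  obtain ⟨hsStore, hsD, z, hzmem, hzC⟩ := hwit
  set blk : ℕ → List (Act G) := fun i => List.replicate (m i) (s i) with hblkdef
  set B : ℕ → ℕ := fun n => (blocksConcat blk n).length with hBdef
  have hBsucc : ∀ n, B (n+1) = B n + m n := by
    intro n
    simp [hBdef, blocksConcat_succ', hblkdef]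
  have hBmono : ∀ a b, a ≤ b → B a ≤ B b := by
    intro a b hab
    induction b with
    | zero => simp [Nat.le_zero.mp hab]
    | succ b ih =>
      rcases Nat.lt_or_ge a (b+1) with h | h
      · have := ih (by omega); rw [hBsucc]; omega
      · have : a = b + 1 := by omega
        simp [this]
  have hBge : ∀ n, n ≤ B n := by
    intro n
    induction n with
    | zero => simp
    | succ n ih => have := hm n; rw [hBsucc]; omega
  have heval : ∀ p i, B i ≤ p → p < B (i+1) → s' p = s i := by
    intro p i h1 h2
    have hp : p < (blocksConcat blk (i+1)).length := h2
    have := hs'.1 (i+1) p hp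
    rw [← this]
    simp only [List.get_eq_getElem]
    simp only [blocksConcat_succ']
    rw [List.getElem_append_right h1]
    simp [hblkdef]
  have hidx : ∀ p, ∃ i, B i ≤ p ∧ p < B (i+1) := by
    intro p
    have hex : ∃ n, p < B n := ⟨p + 1, lt_of_lt_of_le (by omega) (hBge (p+1))⟩
    classical
    have hfind := Nat.find_spec hex
    have hpos : 0 < Nat.find hex := by
      rcases Nat.eq_zero_or_pos (Nat.find hex) with h | h
      · exfalso
        have : p < B 0 := by rw [← h]; exact hfind
        simp [hBdef, blocksConcat] at this
      · exact h
    refine ⟨Nat.find hex - 1, ?_, ?_⟩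
    · have := Nat.find_min hex (m := Nat.find hex - 1) (by omega)
      omega
    · have : Nat.find hex - 1 + 1 = Nat.find hex := by omega
      rw [this]; exact hfind
  -- Store membership
  have hstore : s' ∈ Store G := by
    intro p hp
    obtain ⟨i, hi1, hi2⟩ := hidx p
    have hsp : s' p = s i := heval p i hi1 hi2
    rw [hsp] at hp
    obtain ⟨j, hji, hjw, hjv, hjnw⟩ := hsStore i hp
    have hmj := hm j
    have hBj := hBsucc j
    have hq1 : B j ≤ B (j+1) - 1 := by omega
    have hq2 : B (j+1) - 1 < B (j+1) := by omega
    have hq : s' (B (j+1) - 1) = s j := heval _ j hq1 hq2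
    have hji' : B (j+1) ≤ B i := hBmono (j+1) i hji
    refine ⟨B (j+1) - 1, by omega, by rw [hq]; exact hjw, by rw [hq, hsp]; exact hjv, ?_⟩
    intro k hk1 hk2
    obtain ⟨i', h1, h2⟩ := hidx k
    have hk : s' k = s i' := heval k i' h1 h2
    rw [hk]
    have hji'' : j < i' := by
      by_contra h
      push_neg at h
      have : B (i'+1) ≤ B (j+1) := hBmono _ _ (by omega)
      omega
    rcases Nat.lt_or_ge i' i with h | h
    · exact hjnw i' hji'' h
    · have hii : i' = i := by
        by_contra hne
        have : B (i+1) ≤ B i' := hBmono _ _ (by omega)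
        omega
      rw [hii]
      exact read_not_write _ hp
  have hm1 : ∀ i, (s i).isC = false → m i = 1 := by
    intro i h
    by_contra hne
    rw [hmC i hne] at h
    exact absurd h (by simp)
  have hA : ∀ n, blocksConcat blk n = firstN s' (B n) := by
    intro n
    have := isListPrefix_eq_firstN (hs'.1 n)
    exact this
  -- D projection blockwise
  have hfiltD : ∀ n, (blocksConcat blk n).filter Act.isD = (firstN s n).filter Act.isD := by
    intro n
    induction n with
    | zero => simp [blocksConcat, firstN]
    | succ n ih =>
      rw [blocksConcat_succ', firstN_succ', List.filter_append, List.filter_append, ih]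
      congr 1
      show (List.replicate (m n) (s n)).filter Act.isD = _
      rw [List.filter_replicate]
      by_cases h : (s n).isD = true
      · have : m n = 1 := hm1 n ((isD_iff_not_isC (s n)).mp h)
        simp [h, this]
      · simp at h
        simp [h]
  have hDproj : ∀ n, IsListPrefix ((firstN s' n).filter Act.isD) u := by
    intro n
    have hpre : (firstN s' n).filter Act.isD <+: (firstN s' (B n)).filter Act.isD :=
      List.IsPrefix.filter _ (firstN_prefix_firstN s' (hBge n))
    refine isListPrefix_mono hpre ?_
    rw [← hA, hfiltD]
    exact hsD n
  -- C projection
  set ys : ℕ → List (Act G) := fun i => List.filter Act.isC [s i] with hysdef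
  set xs : ℕ → List (Act G) := fun i => List.replicate (m i - 1) (s i) with hxsdef
  have hblock : ∀ i, xs i ++ ys i = (blk i).filter Act.isC := by
    intro i
    show List.replicate (m i - 1) (s i) ++ List.filter Act.isC [s i]
        = (List.replicate (m i) (s i)).filter Act.isC
    rw [List.filter_replicate]
    by_cases h : (s i).isC = true
    · have hmi := hm i
      simp only [h, if_pos]
      rw [show List.filter Act.isC [s i] = [s i] by simp [h]]
      rw [← List.replicate_succ']
      congr 1
      omega
    · simp at h
      have : m i = 1 := hm1 i h
      simp [h, this]
  have hCblocks : ∀ n, blocksConcat (fun i => xs i ++ ys i) n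
      = (blocksConcat blk n).filter Act.isC := by
    intro n
    induction n with
    | zero => simp [blocksConcat]
    | succ n ih =>
      rw [blocksConcat_succ', blocksConcat_succ', List.filter_append, ih, hblock]
  have hys : ∀ n, blocksConcat ys n = (firstN s n).filter Act.isC := by
    intro n
    induction n with
    | zero => simp [blocksConcat, firstN]
    | succ n ih =>
      rw [blocksConcat_succ', firstN_succ', List.filter_append, ih]
  have hlenxs : ∀ n, (blocksConcat xs n).length ≤ (blocksConcat (fun i => xs i ++ ys i) n).length := by
    intro n
    induction n with
    | zero => simp [blocksConcat]
    | succ n ih =>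
      rw [blocksConcat_succ', blocksConcat_succ']
      simp only [List.length_append]
      omega
  set g : ℕ → List (Act G) := fun n => (firstN s' n).filter Act.isC with hgdef
  have hgB : ∀ n, g (B n) = blocksConcat (fun i => xs i ++ ys i) n := by
    intro n
    rw [hCblocks, hA]
  have hgmono : ∀ n, g n <+: g (n+1) :=
    fun n => List.IsPrefix.filter _ (firstN_prefix_firstN s' (by omega))
  have hgub : ∀ k, ∃ n, k < (g n).length := by
    intro k
    obtain ⟨n, hn⟩ := hvs.2 k
    refine ⟨B n, ?_⟩
    have h1 := hlenxs n
    rw [hgB]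
    calc k < (blocksConcat xs n).length := hn
    _ ≤ _ := h1
  obtain ⟨z', hz'⟩ := exists_limit g hgmono hgub
  -- M nonempty
  cases M with
  | nil => simp [multiShuffle] at hzmem
  | cons v M' =>
    refine ⟨hstore, hstore, hDproj, z', ?_, fun n => hz' n⟩
    refine ⟨vs, rfl, z, hzmem, xs, ys, fun n => hvs.1 n, ?_, ?_, ?_⟩
    · intro n
      rw [hys]
      exact hzC n
    · intro n
      rw [← hgB]
      exact hz' (B n)
    · intro k
      obtain ⟨n, hn⟩ := hvs.2 k
      exact ⟨n, lt_of_lt_of_le hn (hlenxs n)⟩
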